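/- Let T be an ideal of a semigroup S with generators σ : X⁺ → S, and let σ/T : X⁺ → S/T be the induced generators of the Rees quotient. Then the quotient morphism S¹ → (S/T)¹ induces a label-preserving surjective graph morphism from the loop automaton of S onto the loop automaton of S/T; consequently L_σ(S) ⊆ L_{σ/T}(S/T). -/
import Mathlib


/-- Right action of a semigroup element on the carrier of `A¹` (the semigroup
`A` with identity `none` adjoined), where the semigroup multiplication on `A`
is given by `f`. -/
def act {A : Type*} (f : A → A → A) : Option A → A → Option A
  | none, s => some s
  | some t, s => some (f t s)

/-- One edge of the loop automaton of the semigroup with carrier `A`,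
multiplication `f` and generators `σ : X → A`: vertices are elements of `A¹`
(with `none` the adjoined identity `1`), with a positive edge `p →ˣ p·σ(x)`
and its reverse labelled `x̄`. -/
def sstep {A X : Type*} (f : A → A → A) (σ : X → A) (p : Option A) :
    X ⊕ X → Option A → Prop
  | Sum.inl x, q => act f p (σ x) = q
  | Sum.inr x, q => act f q (σ x) = p

/-- `spathIn f σ V p w q` holds iff `w` labels a path from `p` to `q` in the
loop automaton of the semigroup `(A, f)` with generators `σ`, all of whose
intermediate vertices lie in the vertex set `V`. -/
def spathIn {A X : Type*} (f : A → A → A) (σ : X → A) (V : Set (Option A)) :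
    Option A → List (X ⊕ X) → Option A → Prop
  | p, [], q => p = q
  | p, a :: w, q => ∃ r ∈ V, sstep f σ p a r ∧ spathIn f σ V r w q

open Classical in
/-- Multiplication of the Rees quotient `S/T`: carrier `Option S` with `none`
the zero, elements of `S \ T` embedded via `some`. -/
noncomputable def reesQuotMul {S : Type*} [Semigroup S] (T : Set S) :
    Option S → Option S → Option S
  | some s, some t => if s * t ∈ T then none else some (s * t)
  | _, _ => none

open Classical in
/-- The quotient map `S → S/T`, sending `s` to itself if `s ∉ T` and to `0`
if `s ∈ T`. -/
noncomputable def reesQuotMap {S : Type*} [Semigroup S] (T : Set S) (s : S) :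
    Option S :=
  if s ∈ T then none else some s

lemma reesQuotMap_mul {S : Type*} [Semigroup S] (T : Set S)
    (hideal : ∀ s t : S, t ∈ T → s * t ∈ T ∧ t * s ∈ T) (t s : S) :
    reesQuotMap T (t * s) = reesQuotMul T (reesQuotMap T t) (reesQuotMap T s) := by
  unfold reesQuotMap reesQuotMul
  by_cases ht : t ∈ T
  · simp [ht, (hideal s t ht).2]
  by_cases hs : s ∈ T
  · simp [ht, hs, (hideal t s hs).1]
  · simp [ht, hs, reesQuotMap]

lemma act_map {S : Type*} [Semigroup S] (T : Set S)
    (hideal : ∀ s t : S, t ∈ T → s * t ∈ T ∧ t * s ∈ T) (p : Option S) (s : S) :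
    Option.map (reesQuotMap T) (act (· * ·) p s) =
      act (reesQuotMul T) (Option.map (reesQuotMap T) p) (reesQuotMap T s) := by
  cases p with
  | none => rfl
  | some t => simp [act, reesQuotMap_mul T hideal]

/-- Let `T` be an ideal of a semigroup `S` with generators `σ : X⁺ → S`. The
quotient morphism `S¹ → (S/T)¹` (vertex map `φ = Option.map (reesQuotMap T)`)
induces a label-preserving surjective graph morphism from the loop automaton
of `S` onto the loop automaton of `S/T` (whose vertex set is
`V = {1} ∪ (S \ T) ∪ {0}`); consequently `L_σ(S) ⊆ L_{σ/T}(S/T)`. -/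
theorem loopAutomaton_reesQuotient_morphism {S X : Type*} [Semigroup S]
    (T : Set S) (σ : X → S) (hne : T.Nonempty)
    (hsub : ∀ a ∈ T, ∀ b ∈ T, a * b ∈ T)
    (hideal : ∀ s t : S, t ∈ T → s * t ∈ T ∧ t * s ∈ T)
    (hσ : ∀ s : S, ∃ u : List X,
      (u.map σ).foldl (act (· * ·)) none = some s) :
    -- the vertex map lands in the vertex set of the loop automaton of S/T
    (∀ p : Option S, Option.map (reesQuotMap T) p ∈
      {v : Option (Option S) | ∀ s : S, v = some (some s) → s ∉ T}) ∧
    -- it is label-preserving on edges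
    (∀ (p : Option S) (a : X ⊕ X) (r : Option S),
      sstep (· * ·) σ p a r →
      sstep (reesQuotMul T) (fun x => reesQuotMap T (σ x))
        (Option.map (reesQuotMap T) p) a (Option.map (reesQuotMap T) r)) ∧
    -- it is surjective on vertices
    (∀ v ∈ {v : Option (Option S) | ∀ s : S, v = some (some s) → s ∉ T},
      ∃ p : Option S, Option.map (reesQuotMap T) p = v) ∧
    -- and surjective on edges
    (∀ p' ∈ {v : Option (Option S) | ∀ s : S, v = some (some s) → s ∉ T},
      ∀ r' ∈ {v : Option (Option S) | ∀ s : S, v = some (some s) → s ∉ T},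
      ∀ a : X ⊕ X,
        sstep (reesQuotMul T) (fun x => reesQuotMap T (σ x)) p' a r' →
        ∃ p r : Option S, Option.map (reesQuotMap T) p = p' ∧
          Option.map (reesQuotMap T) r = r' ∧ sstep (· * ·) σ p a r) ∧
    -- consequently L_σ(S) ⊆ L_{σ/T}(S/T)
    (∀ w : List (X ⊕ X), spathIn (· * ·) σ Set.univ none w none →
      spathIn (reesQuotMul T) (fun x => reesQuotMap T (σ x))
        {v : Option (Option S) | ∀ s : S, v = some (some s) → s ∉ T}
        none w none) := by
  classical
  have hmem : ∀ p : Option S, Option.map (reesQuotMap T) p ∈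
      {v : Option (Option S) | ∀ s : S, v = some (some s) → s ∉ T} := by
    intro p s hs
    cases p with
    | none => simp at hs
    | some t =>
      simp only [Option.map_some] at hs
      have : reesQuotMap T t = some s := Option.some.inj hs
      unfold reesQuotMap at this
      split_ifs at this with ht
      · exact (Option.some.inj this) ▸ ht
  have hedge : ∀ (p : Option S) (a : X ⊕ X) (r : Option S),
      sstep (· * ·) σ p a r →
      sstep (reesQuotMul T) (fun x => reesQuotMap T (σ x))
        (Option.map (reesQuotMap T) p) a (Option.map (reesQuotMap T) r) := by
    intro p a r h
    cases a with
    | inl x =>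
      simp only [sstep] at h ⊢
      rw [← h, act_map T hideal]
    | inr x =>
      simp only [sstep] at h ⊢
      rw [← h, act_map T hideal]
  have hsurj : ∀ v ∈ {v : Option (Option S) | ∀ s : S, v = some (some s) → s ∉ T},
      ∃ p : Option S, Option.map (reesQuotMap T) p = v := by
    intro v hv
    match v with
    | none => exact ⟨none, rfl⟩
    | some none =>
      obtain ⟨t, ht⟩ := hne
      exact ⟨some t, by simp [reesQuotMap, ht]⟩
    | some (some s) =>
      have hs : s ∉ T := hv s rfl
      exact ⟨some s, by simp [reesQuotMap, hs]⟩
  refine ⟨hmem, hedge, hsurj, ?_, ?_⟩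
  · intro p' hp' r' hr' a h
    cases a with
    | inl x =>
      obtain ⟨p, hp⟩ := hsurj p' hp'
      refine ⟨p, act (· * ·) p (σ x), hp, ?_, rfl⟩
      rw [act_map T hideal, hp]
      exact h
    | inr x =>
      obtain ⟨r, hr⟩ := hsurj r' hr'
      refine ⟨act (· * ·) r (σ x), r, ?_, hr, rfl⟩
      rw [act_map T hideal, hr]
      exact h
  · intro w hw
    have main : ∀ (w : List (X ⊕ X)) (p q : Option S),
        spathIn (· * ·) σ Set.univ p w q →
        spathIn (reesQuotMul T) (fun x => reesQuotMap T (σ x))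
          {v : Option (Option S) | ∀ s : S, v = some (some s) → s ∉ T}
          (Option.map (reesQuotMap T) p) w (Option.map (reesQuotMap T) q) := by
      intro w
      induction w with
      | nil => intro p q h; exact congrArg _ h
      | cons a w ih =>
        rintro p q ⟨r, -, hstep, hrest⟩
        exact ⟨Option.map (reesQuotMap T) r, hmem r, hedge p a r hstep, ih r q hrest⟩
    exact main w none none hw
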